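/- Let u ∈ X be fixed with t ↦ f'(u(t)) continuous, let v = v(u) solve −v'' + f'(u)v = 0, v(0)=0, v'(0)=1, and let W(u)(π) be the Prüfer argument at π. Then the derivative of u ↦ W(u)(π) in direction φ is given by DW(u)(π)·φ = −(v(π)² + v'(π)²)^{−1} ∫₀^π f''(u(r))·φ(r)·v(r)² dr. -/

import Mathlib

open Real Set intervalIntegral Filter Topology

section helpers
variable {E : Type*} [NormedAddCommGroup E] [NormedSpace ℝ E]

private lemma hasDerivWithinAt_Ici_of_Icc {g : ℝ → E} {g' : E} {a b t : ℝ} (ht : t ∈ Ico a b)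
    (h : HasDerivWithinAt g g' (Icc a b) t) : HasDerivWithinAt g g' (Ici t) t :=
  h.mono_of_mem_nhdsWithin (Icc_mem_nhdsGE_of_mem ht)

private lemma gronwall_le {g g' : ℝ → E} {b K δ ρ : ℝ}
    (hcont : ContinuousOn g (Icc 0 b))
    (hderiv : ∀ t ∈ Icc 0 b, HasDerivWithinAt g (g' t) (Icc 0 b) t)
    (h0 : ‖g 0‖ ≤ δ)
    (hb : ∀ t ∈ Icc 0 b, ‖g' t‖ ≤ K * ‖g t‖ + ρ) :
    ∀ t ∈ Icc 0 b, ‖g t‖ ≤ gronwallBound δ K ρ t := by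
  intro t ht
  have := norm_le_gronwallBound_of_norm_deriv_right_le hcont
    (fun x hx => hasDerivWithinAt_Ici_of_Icc hx (hderiv x (Ico_subset_Icc_self hx))) h0
    (fun x hx => hb x (Ico_subset_Icc_self hx)) t ht
  simpa using this

private lemma gronwall_zero {g g' : ℝ → E} {b K : ℝ}
    (hcont : ContinuousOn g (Icc 0 b))
    (hderiv : ∀ t ∈ Icc 0 b, HasDerivWithinAt g (g' t) (Icc 0 b) t)
    (h0 : g 0 = 0)
    (hb : ∀ t ∈ Icc 0 b, ‖g' t‖ ≤ K * ‖g t‖) :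
    ∀ t ∈ Icc 0 b, g t = 0 := by
  intro t ht
  have := gronwall_le (δ := 0) (ρ := 0) hcont hderiv (by simp [h0])
    (fun x hx => by simpa using hb x hx) t ht
  rw [gronwallBound_ε0_δ0] at this
  simpa using norm_le_zero_iff.mp (le_trans this le_rfl)

private lemma gb_le₁ {K δ b t : ℝ} (hK : 0 < K) (hδ : 0 ≤ δ) (htb : t ≤ b) :
    gronwallBound δ K 0 t ≤ δ * Real.exp (K * b) := by
  rw [gronwallBound_ε0]
  exact mul_le_mul_of_nonneg_left (Real.exp_le_exp.2 (by nlinarith)) hδ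

private lemma gb_le₂ {K ρ b t : ℝ} (hK : 0 < K) (hρ : 0 ≤ ρ) (htb : t ≤ b) :
    gronwallBound 0 K ρ t ≤ ρ * ((Real.exp (K * b) - 1) / K) := by
  rw [gronwallBound_of_K_ne_0 hK.ne']
  have h1 : Real.exp (K * t) ≤ Real.exp (K * b) := Real.exp_le_exp.2 (by nlinarith)
  have h2 : (0:ℝ) ≤ ρ / K := div_nonneg hρ hK.le
  calc 0 * Real.exp (K * t) + ρ / K * (Real.exp (K * t) - 1)
      = ρ / K * (Real.exp (K * t) - 1) := by ring
    _ ≤ ρ / K * (Real.exp (K * b) - 1) := by nlinarith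
    _ = ρ * ((Real.exp (K * b) - 1) / K) := by ring

private lemma lip_of_deriv_bound {g : ℝ → ℝ} {dg : ℝ → ℝ}
    (hd : ∀ x, HasDerivAt g (dg x) x) (hbd : ∀ x, |dg x| ≤ 1) (x y : ℝ) :
    |g x - g y| ≤ |x - y| := by
  have := Convex.norm_image_sub_le_of_norm_hasDerivWithin_le
    (f := g) (f' := dg) (C := 1) (s := Set.univ)
    (fun z _ => (hd z).hasDerivWithinAt) (fun z _ => hbd z) convex_univ (mem_univ y) (mem_univ x)
  simpa using this

private lemma abs_cos_sq_sub_le (x y : ℝ) : |Real.cos x ^ 2 - Real.cos y ^ 2| ≤ |x - y| := by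
  apply lip_of_deriv_bound (g := fun x => Real.cos x ^ 2) (dg := fun x => 2 * Real.cos x ^ 1 * -Real.sin x)
  · exact fun z => (Real.hasDerivAt_cos z).pow 2
  · intro z
    have h := Real.sin_sq_add_cos_sq z
    rw [abs_le]; constructor <;> nlinarith [sq_nonneg (Real.sin z - Real.cos z), sq_nonneg (Real.sin z + Real.cos z)]

private lemma abs_sin_sq_sub_le (x y : ℝ) : |Real.sin x ^ 2 - Real.sin y ^ 2| ≤ |x - y| := by
  apply lip_of_deriv_bound (g := fun x => Real.sin x ^ 2) (dg := fun x => 2 * Real.sin x ^ 1 * Real.cos x)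
  · exact fun z => (Real.hasDerivAt_sin z).pow 2
  · intro z
    have h := Real.sin_sq_add_cos_sq z
    rw [abs_le]; constructor <;> nlinarith [sq_nonneg (Real.sin z - Real.cos z), sq_nonneg (Real.sin z + Real.cos z)]

private lemma abs_cos_sub_le (x y : ℝ) : |Real.cos x - Real.cos y| ≤ |x - y| := by
  apply lip_of_deriv_bound (dg := fun x => -Real.sin x)
  · exact fun z => Real.hasDerivAt_cos z
  · intro z; rw [abs_neg]; exact Real.abs_sin_le_one z

private lemma abs_sin_sub_le (x y : ℝ) : |Real.sin x - Real.sin y| ≤ |x - y| := by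
  apply lip_of_deriv_bound (dg := fun x => Real.cos x)
  · exact fun z => Real.hasDerivAt_sin z
  · intro z; exact Real.abs_cos_le_one z

private lemma tendsto_of_abs_sub_le {g : ℝ → ℝ} {L C : ℝ}
    (h : ∀ ε : ℝ, |ε| ≤ 1 → |g ε - L| ≤ C * |ε|) : Filter.Tendsto g (nhds 0) (nhds L) := by
  have hev : ∀ᶠ ε : ℝ in nhds 0, |g ε - L| ≤ C * |ε| := by
    have h1 : ∀ᶠ ε : ℝ in nhds 0, |ε| ≤ 1 := by
      filter_upwards [Metric.closedBall_mem_nhds (0:ℝ) one_pos] with ε hε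
      simpa [Real.dist_eq] using hε
    filter_upwards [h1] with ε hε using h ε hε
  have h2 : Filter.Tendsto (fun ε : ℝ => C * |ε|) (nhds 0) (nhds 0) := by
    have : Filter.Tendsto (fun ε : ℝ => C * |ε|) (nhds 0) (nhds (C * |0|)) :=
      (continuous_const.mul (continuous_abs)).tendsto 0
    simpa using this
  have h3 : Filter.Tendsto (fun ε => g ε - L) (nhds 0) (nhds 0) :=
    squeeze_zero_norm' (by simpa [Real.norm_eq_abs] using hev) h2
  have := h3.add (tendsto_const_nhds (x := L))
  simpa using this

end helpers

set_option maxHeartbeats 4000000 in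
/-- derivative of u ↦ W(u)(π) in direction φ:
DW(u)(π)·φ = -(v(π)²+v'(π)²)⁻¹ ∫₀^π f''(u) φ v² dr, stated along the line u + εφ. -/
theorem prufer_directional_derivative (f u φ : ℝ → ℝ)
    (hf : ContDiff ℝ 2 f)
    (hu : ContinuousOn u (Icc 0 π)) (hφ : ContinuousOn φ (Icc 0 π))
    (V V' W : ℝ → ℝ → ℝ)
    (hV0 : ∀ ε : ℝ, V ε 0 = 0) (hV'0 : ∀ ε : ℝ, V' ε 0 = 1)
    (hV : ∀ ε : ℝ, ∀ t ∈ Icc (0:ℝ) π, HasDerivWithinAt (V ε) (V' ε t) (Icc 0 π) t)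
    (hV' : ∀ ε : ℝ, ∀ t ∈ Icc (0:ℝ) π,
      HasDerivWithinAt (V' ε) (deriv f (u t + ε * φ t) * V ε t) (Icc 0 π) t)
    (hW0 : ∀ ε : ℝ, W ε 0 = 0)
    (hW : ∀ ε : ℝ, ∀ t ∈ Icc (0:ℝ) π, HasDerivWithinAt (W ε)
      (cos (W ε t) ^ 2 - deriv f (u t + ε * φ t) * sin (W ε t) ^ 2) (Icc 0 π) t) :
    HasDerivAt (fun ε => W ε π)
      (-(V 0 π ^ 2 + V' 0 π ^ 2)⁻¹ *
        ∫ r in (0:ℝ)..π, deriv (deriv f) (u r) * φ r * V 0 r ^ 2) 0 := by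
  have hπ : (0:ℝ) ≤ π := pi_pos.le
  have h0I : (0:ℝ) ∈ Icc (0:ℝ) π := ⟨le_refl 0, hπ⟩
  have hπI : π ∈ Icc (0:ℝ) π := ⟨hπ, le_refl π⟩
  set q : ℝ → ℝ → ℝ := fun ε t => deriv f (u t + ε * φ t) with hqdef
  -- regularity of f
  have hf1 : ContDiff ℝ 1 (deriv f) := by
    have : ContDiff ℝ (1 + 1) f := by exact_mod_cast hf
    exact (contDiff_succ_iff_deriv.mp this).2.2
  have hdf_cont : Continuous (deriv f) := hf1.continuous
  have hddf_cont : Continuous (deriv (deriv f)) := (contDiff_one_iff_deriv.mp hf1).2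
  have hdf_diff : ∀ y : ℝ, HasDerivAt (deriv f) (deriv (deriv f) y) y := fun y =>
    ((contDiff_one_iff_deriv.mp hf1).1 y).hasDerivAt
  -- continuity of data
  have cV : ∀ ε, ContinuousOn (V ε) (Icc 0 π) := fun ε t ht => (hV ε t ht).continuousWithinAt
  have cV' : ∀ ε, ContinuousOn (V' ε) (Icc 0 π) := fun ε t ht => (hV' ε t ht).continuousWithinAt
  have cW : ∀ ε, ContinuousOn (W ε) (Icc 0 π) := fun ε t ht => (hW ε t ht).continuousWithinAt
  have cq : ∀ ε, ContinuousOn (q ε) (Icc 0 π) := fun ε =>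
    hdf_cont.comp_continuousOn (hu.add (continuousOn_const.mul hφ))
  -- bounds on u, φ
  obtain ⟨Cu, hCu⟩ := isCompact_Icc.exists_bound_of_continuousOn hu
  obtain ⟨Cφ, hCφ⟩ := isCompact_Icc.exists_bound_of_continuousOn hφ
  have hCφ0 : 0 ≤ Cφ := le_trans (norm_nonneg _) (hCφ 0 h0I)
  set M : ℝ := Cu + Cφ with hMdef
  have hmem : ∀ ε : ℝ, |ε| ≤ 1 → ∀ t ∈ Icc (0:ℝ) π, u t + ε * φ t ∈ Icc (-M) M := by
    intro ε hε t ht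
    have h1 := hCu t ht
    have h2 := hCφ t ht
    rw [Real.norm_eq_abs] at h1 h2
    have h3 : |ε * φ t| ≤ Cφ := by
      rw [abs_mul]
      calc |ε| * |φ t| ≤ 1 * Cφ := mul_le_mul hε h2 (abs_nonneg _) zero_le_one
        _ = Cφ := one_mul _
    have h4 := abs_le.mp h1
    have h5 := abs_le.mp h3
    constructor <;> simp only [hMdef] <;> linarith
  -- bounds on deriv f, deriv (deriv f) on [-M, M]
  obtain ⟨Q0, hQ0⟩ := isCompact_Icc.exists_bound_of_continuousOn
    (hdf_cont.continuousOn (s := Icc (-M) M))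
  set Q : ℝ := max Q0 1 with hQdef
  have hQ1 : (1:ℝ) ≤ Q := le_max_right _ _
  have hQpos : (0:ℝ) < Q := lt_of_lt_of_le one_pos hQ1
  have hQ : ∀ x ∈ Icc (-M) M, |deriv f x| ≤ Q := fun x hx =>
    le_trans (by simpa [Real.norm_eq_abs] using hQ0 x hx) (le_max_left _ _)
  obtain ⟨L0, hL0⟩ := isCompact_Icc.exists_bound_of_continuousOn
    (hddf_cont.continuousOn (s := Icc (-M) M))
  set Lf : ℝ := max L0 0 with hLfdef
  have hLf0 : (0:ℝ) ≤ Lf := le_max_right _ _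
  have hLf : ∀ x ∈ Icc (-M) M, |deriv (deriv f) x| ≤ Lf := fun x hx =>
    le_trans (by simpa [Real.norm_eq_abs] using hL0 x hx) (le_max_left _ _)
  -- q bounds
  have hqQ : ∀ ε : ℝ, |ε| ≤ 1 → ∀ t ∈ Icc (0:ℝ) π, |q ε t| ≤ Q := fun ε hε t ht =>
    hQ _ (hmem ε hε t ht)
  have hqdiff : ∀ ε : ℝ, |ε| ≤ 1 → ∀ t ∈ Icc (0:ℝ) π, |q ε t - q 0 t| ≤ Lf * Cφ * |ε| := by
    intro ε hε t ht
    have hx1 : u t + ε * φ t ∈ Icc (-M) M := hmem ε hε t ht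
    have hx0 : u t + 0 * φ t ∈ Icc (-M) M := hmem 0 (by norm_num) t ht
    have key := Convex.norm_image_sub_le_of_norm_hasDerivWithin_le
      (f := deriv f) (f' := fun y => deriv (deriv f) y) (C := Lf) (s := Icc (-M) M)
      (fun y _ => (hdf_diff y).hasDerivWithinAt) (fun y hy => by
        simpa [Real.norm_eq_abs] using hLf y hy) (convex_Icc _ _) hx0 hx1
    have h2 := hCφ t ht
    rw [Real.norm_eq_abs] at h2 key
    simp only [hqdef]
    calc |deriv f (u t + ε * φ t) - deriv f (u t + 0 * φ t)|
        ≤ Lf * |u t + ε * φ t - (u t + 0 * φ t)| := key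
      _ = Lf * (|ε| * |φ t|) := by rw [show u t + ε * φ t - (u t + 0 * φ t) = ε * φ t by ring, abs_mul]
      _ ≤ Lf * (|ε| * Cφ) := by
          apply mul_le_mul_of_nonneg_left _ hLf0
          exact mul_le_mul_of_nonneg_left h2 (abs_nonneg _)
      _ = Lf * Cφ * |ε| := by ring
  -- ### a priori bound on (V, V')
  set B : ℝ := Real.exp (Q * π) with hBdef
  have hB : ∀ ε : ℝ, |ε| ≤ 1 → ∀ t ∈ Icc (0:ℝ) π, |V ε t| ≤ B ∧ |V' ε t| ≤ B := by
    intro ε hε t ht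
    have key := gronwall_le (g := fun t => (V ε t, V' ε t))
      (g' := fun t => (V' ε t, q ε t * V ε t)) (b := π) (K := Q) (δ := 1) (ρ := 0)
      ((cV ε).prodMk (cV' ε))
      (fun s hs => (hV ε s hs).prodMk (hV' ε s hs))
      (by simp [hV0, hV'0, Prod.norm_def])
      ?_ t ht
    · have h2 : gronwallBound 1 Q 0 t ≤ 1 * Real.exp (Q * π) := gb_le₁ hQpos zero_le_one ht.2
      have h3 : ‖((V ε t, V' ε t) : ℝ × ℝ)‖ ≤ B := by
        calc ‖((V ε t, V' ε t) : ℝ × ℝ)‖ ≤ gronwallBound 1 Q 0 t := key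
          _ ≤ 1 * Real.exp (Q * π) := h2
          _ = B := by rw [hBdef]; ring
      simp only [Prod.norm_def, Real.norm_eq_abs] at h3
      exact ⟨le_trans (le_max_left _ _) h3, le_trans (le_max_right _ _) h3⟩
    · intro s hs
      rw [Prod.norm_def, Prod.norm_def]
      simp only [Real.norm_eq_abs]
      rw [add_zero]
      apply max_le
      · calc |V' ε s| ≤ max |V ε s| |V' ε s| := le_max_right _ _
          _ ≤ Q * max |V ε s| |V' ε s| := le_mul_of_one_le_left (le_max_of_le_left (abs_nonneg _)) hQ1
      · calc |q ε s * V ε s| = |q ε s| * |V ε s| := abs_mul _ _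
          _ ≤ Q * |V ε s| := mul_le_mul_of_nonneg_right (hqQ ε hε s hs) (abs_nonneg _)
          _ ≤ Q * max |V ε s| |V' ε s| := mul_le_mul_of_nonneg_left (le_max_left _ _) hQpos.le
  have hB0 : (0:ℝ) ≤ B := Real.exp_nonneg _
  -- ### continuity in ε of (V, V')
  set CD : ℝ := Lf * Cφ * B * ((Real.exp (Q * π) - 1) / Q) with hCDdef
  have hCD0 : (0:ℝ) ≤ CD := by
    apply mul_nonneg (mul_nonneg (mul_nonneg hLf0 hCφ0) hB0)
    apply div_nonneg _ hQpos.le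
    have : (1:ℝ) ≤ Real.exp (Q * π) := by
      rw [show (1:ℝ) = Real.exp 0 by simp]
      exact Real.exp_le_exp.2 (mul_nonneg hQpos.le hπ)
    linarith
  have hDiff : ∀ ε : ℝ, |ε| ≤ 1 → ∀ t ∈ Icc (0:ℝ) π,
      |V ε t - V 0 t| ≤ CD * |ε| ∧ |V' ε t - V' 0 t| ≤ CD * |ε| := by
    intro ε hε t ht
    have key := gronwall_le (g := fun t => (V ε t - V 0 t, V' ε t - V' 0 t))
      (g' := fun t => (V' ε t - V' 0 t, q ε t * V ε t - q 0 t * V 0 t))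
      (b := π) (K := Q) (δ := 0) (ρ := Lf * Cφ * B * |ε|)
      (((cV ε).sub (cV 0)).prodMk ((cV' ε).sub (cV' 0)))
      (fun s hs => ((hV ε s hs).sub (hV 0 s hs)).prodMk ((hV' ε s hs).sub (hV' 0 s hs)))
      (by simp [hV0, hV'0, Prod.norm_def])
      ?_ t ht
    · have h2 : gronwallBound 0 Q (Lf * Cφ * B * |ε|) t
          ≤ (Lf * Cφ * B * |ε|) * ((Real.exp (Q * π) - 1) / Q) :=
        gb_le₂ hQpos (by positivity) ht.2
      have h3 : ‖((V ε t - V 0 t, V' ε t - V' 0 t) : ℝ × ℝ)‖ ≤ CD * |ε| := by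
        calc ‖((V ε t - V 0 t, V' ε t - V' 0 t) : ℝ × ℝ)‖
            ≤ gronwallBound 0 Q (Lf * Cφ * B * |ε|) t := key
          _ ≤ (Lf * Cφ * B * |ε|) * ((Real.exp (Q * π) - 1) / Q) := h2
          _ = CD * |ε| := by rw [hCDdef]; ring
      simp only [Prod.norm_def, Real.norm_eq_abs] at h3
      exact ⟨le_trans (le_max_left _ _) h3, le_trans (le_max_right _ _) h3⟩
    · intro s hs
      rw [Prod.norm_def, Prod.norm_def]
      simp only [Real.norm_eq_abs]
      apply max_le
      · calc |V' ε s - V' 0 s| ≤ max |V ε s - V 0 s| |V' ε s - V' 0 s| := le_max_right _ _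
          _ ≤ Q * max |V ε s - V 0 s| |V' ε s - V' 0 s| :=
            le_mul_of_one_le_left (le_max_of_le_left (abs_nonneg _)) hQ1
          _ ≤ Q * max |V ε s - V 0 s| |V' ε s - V' 0 s| + Lf * Cφ * B * |ε| :=
            le_add_of_nonneg_right (by positivity)
      · have e1 : q ε s * V ε s - q 0 s * V 0 s
            = q ε s * (V ε s - V 0 s) + (q ε s - q 0 s) * V 0 s := by ring
        rw [e1]
        calc |q ε s * (V ε s - V 0 s) + (q ε s - q 0 s) * V 0 s|
            ≤ |q ε s * (V ε s - V 0 s)| + |(q ε s - q 0 s) * V 0 s| := abs_add_le _ _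
          _ = |q ε s| * |V ε s - V 0 s| + |q ε s - q 0 s| * |V 0 s| := by rw [abs_mul, abs_mul]
          _ ≤ Q * max |V ε s - V 0 s| |V' ε s - V' 0 s| + (Lf * Cφ * |ε|) * B := by
              apply add_le_add
              · exact mul_le_mul (hqQ ε hε s hs) (le_max_left _ _) (abs_nonneg _) hQpos.le
              · exact mul_le_mul (hqdiff ε hε s hs) ((hB 0 (by norm_num) s hs).1) (abs_nonneg _)
                  (by positivity)
          _ = Q * max |V ε s - V 0 s| |V' ε s - V' 0 s| + Lf * Cφ * B * |ε| := by ring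
  -- ### the Prüfer identity sin(W) V' = cos(W) V
  have hF : ∀ ε : ℝ, |ε| ≤ 1 → ∀ t ∈ Icc (0:ℝ) π,
      Real.sin (W ε t) * V' ε t = Real.cos (W ε t) * V ε t := by
    intro ε hε
    have key := gronwall_zero
      (g := fun t => Real.sin (W ε t) * V' ε t - Real.cos (W ε t) * V ε t)
      (g' := fun t => -(Real.sin (W ε t) * Real.cos (W ε t) * (q ε t + 1)) *
        (Real.sin (W ε t) * V' ε t - Real.cos (W ε t) * V ε t))
      (b := π) (K := Q + 1) ?_ ?_ ?_ ?_
    · intro t ht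
      have h2 : Real.sin (W ε t) * V' ε t - Real.cos (W ε t) * V ε t = 0 := by
        simpa using key t ht
      linarith
    · apply ContinuousOn.sub
      · exact (Real.continuous_sin.comp_continuousOn (cW ε)).mul (cV' ε)
      · exact (Real.continuous_cos.comp_continuousOn (cW ε)).mul (cV ε)
    · intro t ht
      have hsin : HasDerivWithinAt (fun t => Real.sin (W ε t))
          (Real.cos (W ε t) * (Real.cos (W ε t) ^ 2 - q ε t * Real.sin (W ε t) ^ 2))
          (Icc 0 π) t :=
        (Real.hasDerivAt_sin (W ε t)).comp_hasDerivWithinAt t (hW ε t ht)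
      have hcos : HasDerivWithinAt (fun t => Real.cos (W ε t))
          (-Real.sin (W ε t) * (Real.cos (W ε t) ^ 2 - q ε t * Real.sin (W ε t) ^ 2))
          (Icc 0 π) t :=
        (Real.hasDerivAt_cos (W ε t)).comp_hasDerivWithinAt t (hW ε t ht)
      have hd := (hsin.mul (hV' ε t ht)).sub (hcos.mul (hV ε t ht))
      refine hd.congr_deriv (Eq.symm ?_)
      have hpy := Real.sin_sq_add_cos_sq (W ε t)
      linear_combination (q ε t * Real.sin (W ε t) * V ε t - Real.cos (W ε t) * V' ε t) * hpy
    · simp [hW0, hV0, hV'0]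
    · intro t ht
      simp only [Real.norm_eq_abs]
      rw [abs_mul, abs_neg]
      apply mul_le_mul_of_nonneg_right _ (abs_nonneg _)
      have h3 : |q ε t + 1| ≤ Q + 1 := by
        calc |q ε t + 1| ≤ |q ε t| + 1 := by simpa using abs_add_le (q ε t) 1
          _ ≤ Q + 1 := by linarith [hqQ ε hε t ht]
      calc |Real.sin (W ε t) * Real.cos (W ε t) * (q ε t + 1)|
          = |Real.sin (W ε t)| * |Real.cos (W ε t)| * |q ε t + 1| := by rw [abs_mul, abs_mul]
        _ ≤ 1 * 1 * (Q + 1) := by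
            apply mul_le_mul _ h3 (abs_nonneg _) (by norm_num)
            exact mul_le_mul (Real.abs_sin_le_one _) (Real.abs_cos_le_one _) (abs_nonneg _)
              zero_le_one
        _ = Q + 1 := by ring
  -- ### the radius G
  set G : ℝ → ℝ → ℝ :=
    fun ε t => Real.cos (W ε t) * V' ε t + Real.sin (W ε t) * V ε t with hGdef
  have cG : ∀ ε, ContinuousOn (G ε) (Icc 0 π) := by
    intro ε
    exact ((Real.continuous_cos.comp_continuousOn (cW ε)).mul (cV' ε)).add
      ((Real.continuous_sin.comp_continuousOn (cW ε)).mul (cV ε))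
  have hGsq : ∀ ε : ℝ, |ε| ≤ 1 → ∀ t ∈ Icc (0:ℝ) π,
      G ε t ^ 2 = V ε t ^ 2 + V' ε t ^ 2 := by
    intro ε hε t ht
    have e1 := hF ε hε t ht
    have hpy := Real.sin_sq_add_cos_sq (W ε t)
    simp only [hGdef]
    linear_combination (Real.cos (W ε t) * V ε t - Real.sin (W ε t) * V' ε t) * e1
      + (V ε t ^ 2 + V' ε t ^ 2) * hpy
  have hVpol : ∀ ε : ℝ, |ε| ≤ 1 → ∀ t ∈ Icc (0:ℝ) π,
      V ε t = Real.sin (W ε t) * G ε t ∧ V' ε t = Real.cos (W ε t) * G ε t := by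
    intro ε hε t ht
    have e1 := hF ε hε t ht
    have hpy := Real.sin_sq_add_cos_sq (W ε t)
    constructor
    · simp only [hGdef]
      linear_combination (-Real.cos (W ε t)) * e1 + (-(V ε t)) * hpy
    · simp only [hGdef]
      linear_combination Real.sin (W ε t) * e1 + (-(V' ε t)) * hpy
  -- ### positivity of G 0
  have hG0pos : ∀ t ∈ Icc (0:ℝ) π, 0 < G 0 t := by
    intro t ht
    by_contra hneg
    push_neg at hneg
    have hG00 : G 0 0 = 1 := by simp [hGdef, hW0, hV0, hV'0]
    have hcont : ContinuousOn (G 0) (Icc 0 t) :=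
      (cG 0).mono (Icc_subset_Icc le_rfl ht.2)
    obtain ⟨r, hr, hGr⟩ : ∃ r ∈ Icc 0 t, G 0 r = 0 := by
      have h0mem : (0:ℝ) ∈ Icc (G 0 t) (G 0 0) := by rw [hG00]; exact ⟨hneg, zero_le_one⟩
      obtain ⟨r, hr1, hr2⟩ := intermediate_value_Icc' ht.1 hcont h0mem
      exact ⟨r, hr1, hr2⟩
    have hrI : r ∈ Icc (0:ℝ) π := ⟨hr.1, le_trans hr.2 ht.2⟩
    have hz : V 0 r = 0 ∧ V' 0 r = 0 := by
      have h := hGsq 0 (by norm_num) r hrI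
      rw [hGr] at h
      have h1 : V 0 r ^ 2 = 0 := by nlinarith [sq_nonneg (V 0 r), sq_nonneg (V' 0 r)]
      have h2 : V' 0 r ^ 2 = 0 := by nlinarith [sq_nonneg (V 0 r), sq_nonneg (V' 0 r)]
      exact ⟨pow_eq_zero_iff two_ne_zero |>.mp h1, pow_eq_zero_iff two_ne_zero |>.mp h2⟩
    have hmaps : MapsTo (fun s : ℝ => r - s) (Icc 0 r) (Icc 0 π) := by
      intro s hs
      simp only [mem_Icc] at hs ⊢
      exact ⟨by linarith [hs.2], by linarith [hs.1, hrI.2]⟩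
    have key := gronwall_zero (g := fun s => ((V 0 (r - s), V' 0 (r - s)) : ℝ × ℝ))
      (g' := fun s => ((V' 0 (r - s) * (-1), q 0 (r - s) * V 0 (r - s) * (-1)) : ℝ × ℝ))
      (b := r) (K := Q) ?_ ?_ ?_ ?_
    · have hfin := key r ⟨hr.1, le_rfl⟩
      simp only [sub_self, Prod.mk_eq_zero] at hfin
      rw [hV'0 0] at hfin
      exact one_ne_zero hfin.2
    · apply ContinuousOn.prodMk
      · exact (cV 0).comp ((continuous_const.sub continuous_id).continuousOn) hmaps
      · exact (cV' 0).comp ((continuous_const.sub continuous_id).continuousOn) hmaps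
    · intro s hs
      have hinner : HasDerivWithinAt (fun s : ℝ => r - s) (-1) (Icc 0 r) s :=
        (hasDerivWithinAt_id s _).const_sub r
      have hd1 : HasDerivWithinAt (fun s => V 0 (r - s)) (V' 0 (r - s) * (-1)) (Icc 0 r) s :=
        HasDerivWithinAt.comp s (hV 0 (r - s) (hmaps hs)) hinner hmaps
      have hd2 : HasDerivWithinAt (fun s => V' 0 (r - s))
          (q 0 (r - s) * V 0 (r - s) * (-1)) (Icc 0 r) s :=
        HasDerivWithinAt.comp s (hV' 0 (r - s) (hmaps hs)) hinner hmaps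
      exact hd1.prodMk hd2
    · simp [hz.1, hz.2, Prod.mk_eq_zero]
    · intro s hs
      rw [Prod.norm_def, Prod.norm_def]
      simp only [Real.norm_eq_abs]
      apply max_le
      · calc |V' 0 (r - s) * (-1)| = |V' 0 (r - s)| := by rw [abs_mul]; simp
          _ ≤ max |V 0 (r - s)| |V' 0 (r - s)| := le_max_right _ _
          _ ≤ Q * max |V 0 (r - s)| |V' 0 (r - s)| :=
            le_mul_of_one_le_left (le_max_of_le_left (abs_nonneg _)) hQ1
      · calc |q 0 (r - s) * V 0 (r - s) * (-1)| = |q 0 (r - s)| * |V 0 (r - s)| := by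
              rw [abs_mul, abs_mul]; simp
          _ ≤ Q * |V 0 (r - s)| :=
            mul_le_mul_of_nonneg_right (hqQ 0 (by norm_num) _ (hmaps hs)) (abs_nonneg _)
          _ ≤ Q * max |V 0 (r - s)| |V' 0 (r - s)| :=
            mul_le_mul_of_nonneg_left (le_max_left _ _) hQpos.le
  -- ### continuity in ε of W
  set CW : ℝ := Lf * Cφ * ((Real.exp ((Q + 1) * π) - 1) / (Q + 1)) with hCWdef
  have hWd : ∀ ε : ℝ, |ε| ≤ 1 → ∀ t ∈ Icc (0:ℝ) π, |W ε t - W 0 t| ≤ CW * |ε| := by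
    intro ε hε t ht
    have key := gronwall_le (g := fun t => W ε t - W 0 t)
      (g' := fun t => (Real.cos (W ε t) ^ 2 - q ε t * Real.sin (W ε t) ^ 2)
        - (Real.cos (W 0 t) ^ 2 - q 0 t * Real.sin (W 0 t) ^ 2))
      (b := π) (K := Q + 1) (δ := 0) (ρ := Lf * Cφ * |ε|)
      ((cW ε).sub (cW 0)) (fun s hs => (hW ε s hs).sub (hW 0 s hs))
      (by simp [hW0]) ?_ t ht
    · calc |W ε t - W 0 t| ≤ gronwallBound 0 (Q + 1) (Lf * Cφ * |ε|) t := by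
            simpa [Real.norm_eq_abs] using key
        _ ≤ (Lf * Cφ * |ε|) * ((Real.exp ((Q + 1) * π) - 1) / (Q + 1)) :=
            gb_le₂ (by linarith) (by positivity) ht.2
        _ = CW * |ε| := by rw [hCWdef]; ring
    · intro s hs
      simp only [Real.norm_eq_abs]
      have e1 : (Real.cos (W ε s) ^ 2 - q ε s * Real.sin (W ε s) ^ 2)
          - (Real.cos (W 0 s) ^ 2 - q 0 s * Real.sin (W 0 s) ^ 2)
          = (Real.cos (W ε s) ^ 2 - Real.cos (W 0 s) ^ 2)
            + (-(q ε s * (Real.sin (W ε s) ^ 2 - Real.sin (W 0 s) ^ 2)))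
            + (-((q ε s - q 0 s) * Real.sin (W 0 s) ^ 2)) := by ring
      rw [e1]
      have h1 := abs_cos_sq_sub_le (W ε s) (W 0 s)
      have h2 := abs_sin_sq_sub_le (W ε s) (W 0 s)
      have h3 : |q ε s * (Real.sin (W ε s) ^ 2 - Real.sin (W 0 s) ^ 2)|
          ≤ Q * |W ε s - W 0 s| := by
        rw [abs_mul]
        exact mul_le_mul (hqQ ε hε s hs) h2 (abs_nonneg _) hQpos.le
      have h4 : |(q ε s - q 0 s) * Real.sin (W 0 s) ^ 2| ≤ Lf * Cφ * |ε| := by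
        rw [abs_mul]
        calc |q ε s - q 0 s| * |Real.sin (W 0 s) ^ 2| ≤ (Lf * Cφ * |ε|) * 1 := by
              apply mul_le_mul (hqdiff ε hε s hs) _ (abs_nonneg _) (by positivity)
              rw [abs_of_nonneg (sq_nonneg _)]
              exact Real.sin_sq_le_one _
          _ = Lf * Cφ * |ε| := mul_one _
      calc |(Real.cos (W ε s) ^ 2 - Real.cos (W 0 s) ^ 2)
            + (-(q ε s * (Real.sin (W ε s) ^ 2 - Real.sin (W 0 s) ^ 2)))
            + (-((q ε s - q 0 s) * Real.sin (W 0 s) ^ 2))|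
          ≤ |Real.cos (W ε s) ^ 2 - Real.cos (W 0 s) ^ 2|
            + |(-(q ε s * (Real.sin (W ε s) ^ 2 - Real.sin (W 0 s) ^ 2)))|
            + |(-((q ε s - q 0 s) * Real.sin (W 0 s) ^ 2))| := abs_add_three _ _ _
        _ ≤ |W ε s - W 0 s| + Q * |W ε s - W 0 s| + Lf * Cφ * |ε| := by
            rw [abs_neg, abs_neg]
            exact add_le_add (add_le_add h1 h3) h4
        _ = (Q + 1) * |W ε s - W 0 s| + Lf * Cφ * |ε| := by ring
  have hCW0 : 0 ≤ CW := by
    rw [hCWdef]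
    apply mul_nonneg (mul_nonneg hLf0 hCφ0)
    apply div_nonneg _ (by linarith)
    have : (1:ℝ) ≤ Real.exp ((Q + 1) * π) := by
      rw [show (1:ℝ) = Real.exp 0 by simp]
      exact Real.exp_le_exp.2 (by positivity)
    linarith
  -- ### integrability
  have hint1 : ∀ ε : ℝ, IntervalIntegrable (fun t => (q 0 t - q ε t) * (V 0 t * V ε t))
      MeasureTheory.volume 0 π := by
    intro ε
    apply ContinuousOn.intervalIntegrable
    rw [uIcc_of_le hπ]
    exact ((cq 0).sub (cq ε)).mul ((cV 0).mul (cV ε))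
  have hcontA : ∀ x : ℝ, ContinuousOn (fun t => q x t * V 0 t ^ 2) (Icc 0 π) :=
    fun x => (cq x).mul ((cV 0).pow 2)
  have hint2 : ∀ ε : ℝ, IntervalIntegrable (fun t => q ε t * V 0 t ^ 2)
      MeasureTheory.volume 0 π := by
    intro ε
    apply ContinuousOn.intervalIntegrable
    rw [uIcc_of_le hπ]
    exact hcontA ε
  have hint3 : ∀ ε : ℝ, IntervalIntegrable (fun t => (q 0 t - q ε t) * (V 0 t * (V ε t - V 0 t)))
      MeasureTheory.volume 0 π := by
    intro ε
    apply ContinuousOn.intervalIntegrable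
    rw [uIcc_of_le hπ]
    exact ((cq 0).sub (cq ε)).mul ((cV 0).mul ((cV ε).sub (cV 0)))
  -- ### Wronskian identity via FTC
  have hWr : ∀ ε : ℝ, V' 0 π * V ε π - V 0 π * V' ε π
      = ∫ t in (0:ℝ)..π, (q 0 t - q ε t) * (V 0 t * V ε t) := by
    intro ε
    have hFTC := intervalIntegral.integral_eq_sub_of_hasDeriv_right_of_le hπ
      (f := fun t => V' 0 t * V ε t - V 0 t * V' ε t)
      (f' := fun t => (q 0 t - q ε t) * (V 0 t * V ε t))
      (((cV' 0).mul (cV ε)).sub ((cV 0).mul (cV' ε))) ?_ (hint1 ε)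
    · rw [hFTC]
      simp [hV0, hV'0]
    · intro t ht
      have htI : t ∈ Icc (0:ℝ) π := Ioo_subset_Icc_self ht
      have hd := ((hV' 0 t htI).mul (hV ε t htI)).sub ((hV 0 t htI).mul (hV' ε t htI))
      have hd2 : HasDerivWithinAt (fun t => V' 0 t * V ε t - V 0 t * V' ε t)
          ((q 0 t - q ε t) * (V 0 t * V ε t)) (Icc 0 π) t := by
        refine hd.congr_deriv (Eq.symm ?_)
        simp only [hqdef]
        ring
      exact (hasDerivWithinAt_Ici_of_Icc ⟨htI.1, ht.2⟩ hd2).mono Ioi_subset_Ici_self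
  -- ### key identity
  have hkey : ∀ ε : ℝ, |ε| ≤ 1 → G 0 π * G ε π * Real.sin (W ε π - W 0 π)
      = ∫ t in (0:ℝ)..π, (q 0 t - q ε t) * (V 0 t * V ε t) := by
    intro ε hε
    rw [← hWr ε]
    obtain ⟨hv1, hv2⟩ := hVpol ε hε π hπI
    obtain ⟨hv3, hv4⟩ := hVpol 0 (by norm_num) π hπI
    rw [Real.sin_sub, hv1, hv2, hv3, hv4]
    ring
  -- ### derivative of the parametric integral
  set Itarget : ℝ := ∫ r in (0:ℝ)..π, deriv (deriv f) (u r) * φ r * V 0 r ^ 2 with hItdef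
  have hA : HasDerivAt (fun x : ℝ => ∫ t in (0:ℝ)..π, q x t * V 0 t ^ 2) Itarget 0 := by
    have key := intervalIntegral.hasDerivAt_integral_of_dominated_loc_of_deriv_le
      (μ := MeasureTheory.volume) (F := fun x t => q x t * V 0 t ^ 2)
      (F' := fun x t => deriv (deriv f) (u t + x * φ t) * φ t * V 0 t ^ 2) (x₀ := (0:ℝ))
      (a := 0) (b := π) (bound := fun _ => Lf * Cφ * B ^ 2) (Metric.ball_mem_nhds 0 one_pos) ?_ ?_ ?_ ?_ ?_ ?_
    · have h2 := key.2
      have he : Itarget = ∫ t in (0:ℝ)..π, deriv (deriv f) (u t + 0 * φ t) * φ t * V 0 t ^ 2 := by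
        rw [hItdef]
        simp only [zero_mul, add_zero]
      rw [he]
      exact h2
    · apply Filter.Eventually.of_forall
      intro x
      rw [uIoc_of_le hπ]
      exact ((hcontA x).mono Ioc_subset_Icc_self).aestronglyMeasurable measurableSet_Ioc
    · exact hint2 0
    · rw [uIoc_of_le hπ]
      have : ContinuousOn (fun t => deriv (deriv f) (u t + 0 * φ t) * φ t * V 0 t ^ 2)
          (Icc 0 π) :=
        ((hddf_cont.comp_continuousOn (hu.add (continuousOn_const.mul hφ))).mul hφ).mul
          ((cV 0).pow 2)
      exact (this.mono Ioc_subset_Icc_self).aestronglyMeasurable measurableSet_Ioc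
    · apply MeasureTheory.ae_of_all
      intro t ht x hx
      have htI : t ∈ Icc (0:ℝ) π := by
        rw [uIoc_of_le hπ] at ht
        exact Ioc_subset_Icc_self ht
      have hx1 : |x| ≤ 1 := by
        have := mem_ball_iff_norm.mp hx
        rw [sub_zero, Real.norm_eq_abs] at this
        linarith
      have hb1 : |deriv (deriv f) (u t + x * φ t)| ≤ Lf := hLf _ (hmem x hx1 t htI)
      have hb2 : |φ t| ≤ Cφ := by have := hCφ t htI; rwa [Real.norm_eq_abs] at this
      have hb3 : |V 0 t ^ 2| ≤ B ^ 2 := by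
        rw [abs_of_nonneg (sq_nonneg _)]
        have := (hB 0 (by norm_num) t htI).1
        nlinarith [abs_nonneg (V 0 t), sq_abs (V 0 t)]
      rw [Real.norm_eq_abs, abs_mul, abs_mul]
      exact mul_le_mul (mul_le_mul hb1 hb2 (abs_nonneg _) hLf0) hb3 (abs_nonneg _)
        (by positivity)
    · exact intervalIntegrable_const
    · apply MeasureTheory.ae_of_all
      intro t ht x hx
      have hin : HasDerivAt (fun x : ℝ => u t + x * φ t) (φ t) x := by
        simpa using ((hasDerivAt_id x).mul_const (φ t)).const_add (u t)
      have hcomp := ((hdf_diff (u t + x * φ t)).comp x hin).mul_const (V 0 t ^ 2)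
      simpa [Function.comp, hqdef] using hcomp
  -- ### decomposition of the integral
  have hJdec : ∀ ε : ℝ, (∫ t in (0:ℝ)..π, (q 0 t - q ε t) * (V 0 t * V ε t))
      = ((∫ t in (0:ℝ)..π, q 0 t * V 0 t ^ 2) - ∫ t in (0:ℝ)..π, q ε t * V 0 t ^ 2)
        + ∫ t in (0:ℝ)..π, (q 0 t - q ε t) * (V 0 t * (V ε t - V 0 t)) := by
    intro ε
    rw [← intervalIntegral.integral_sub (hint2 0) (hint2 ε),
      ← intervalIntegral.integral_add ((hint2 0).sub (hint2 ε)) (hint3 ε)]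
    apply intervalIntegral.integral_congr
    intro t _
    ring
  -- ### limits
  have hG0π : 0 < G 0 π := hG0pos π hπI
  have hVlim : Filter.Tendsto (fun ε => V ε π) (nhds 0) (nhds (V 0 π)) :=
    tendsto_of_abs_sub_le (fun ε hε => (hDiff ε hε π hπI).1)
  have hV'lim : Filter.Tendsto (fun ε => V' ε π) (nhds 0) (nhds (V' 0 π)) :=
    tendsto_of_abs_sub_le (fun ε hε => (hDiff ε hε π hπI).2)
  have hWlim : Filter.Tendsto (fun ε => W ε π) (nhds 0) (nhds (W 0 π)) :=
    tendsto_of_abs_sub_le (fun ε hε => hWd ε hε π hπI)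
  have hGlim : Filter.Tendsto (fun ε => G ε π) (nhds 0) (nhds (G 0 π)) := by
    simp only [hGdef]
    exact (((Real.continuous_cos.tendsto _).comp hWlim).mul hV'lim).add
      (((Real.continuous_sin.tendsto _).comp hWlim).mul hVlim)
  have hGne : ∀ᶠ ε : ℝ in nhds 0, G ε π ≠ 0 := by
    have h1 : ∀ᶠ ε : ℝ in nhds 0, G 0 π / 2 < G ε π :=
      hGlim.eventually (eventually_gt_nhds (half_lt_self hG0π))
    filter_upwards [h1] with ε hε
    exact (lt_trans (half_pos hG0π) hε).ne'
  have hsmall : ∀ᶠ ε : ℝ in nhds 0, |ε| ≤ 1 := by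
    filter_upwards [Metric.closedBall_mem_nhds (0:ℝ) one_pos] with ε hε
    simpa [Real.dist_eq] using hε
  -- slope of the integral
  have hJslope : Filter.Tendsto
      (fun ε => (∫ t in (0:ℝ)..π, (q 0 t - q ε t) * (V 0 t * V ε t)) / ε)
      (nhdsWithin 0 {(0:ℝ)}ᶜ) (nhds (-Itarget)) := by
    have T1 : Filter.Tendsto (fun ε => ((∫ t in (0:ℝ)..π, q 0 t * V 0 t ^ 2)
        - ∫ t in (0:ℝ)..π, q ε t * V 0 t ^ 2) / ε)
        (nhdsWithin 0 {(0:ℝ)}ᶜ) (nhds (-Itarget)) := by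
      have hd : HasDerivAt (fun ε : ℝ => (∫ t in (0:ℝ)..π, q 0 t * V 0 t ^ 2)
          - ∫ t in (0:ℝ)..π, q ε t * V 0 t ^ 2) (-Itarget) 0 := by
        exact ((hasDerivAt_const (0:ℝ) (∫ t in (0:ℝ)..π, q 0 t * V 0 t ^ 2)).sub hA).congr_deriv (zero_sub _)
      have hsl := hasDerivAt_iff_tendsto_slope.mp hd
      apply hsl.congr
      intro ε
      simp [slope_def_field]
    have T2 : Filter.Tendsto
        (fun ε => (∫ t in (0:ℝ)..π, (q 0 t - q ε t) * (V 0 t * (V ε t - V 0 t))) / ε)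
        (nhdsWithin 0 {(0:ℝ)}ᶜ) (nhds 0) := by
      apply squeeze_zero_norm' (a := fun ε => (Lf * Cφ * B * CD * π) * |ε|)
      · have hne : ∀ᶠ ε : ℝ in nhdsWithin 0 {(0:ℝ)}ᶜ, ε ≠ 0 := by
          have := eventually_mem_nhdsWithin (s := {(0:ℝ)}ᶜ) (a := (0:ℝ))
          filter_upwards [this] with ε hε
          simpa using hε
        filter_upwards [hsmall.filter_mono nhdsWithin_le_nhds, hne] with ε hε1 hε2
        have hb : |∫ t in (0:ℝ)..π, (q 0 t - q ε t) * (V 0 t * (V ε t - V 0 t))|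
            ≤ ((Lf * Cφ * |ε|) * (B * (CD * |ε|))) * |π - 0| := by
          have := intervalIntegral.norm_integral_le_of_norm_le_const
            (C := (Lf * Cφ * |ε|) * (B * (CD * |ε|)))
            (f := fun t => (q 0 t - q ε t) * (V 0 t * (V ε t - V 0 t))) (a := 0) (b := π) ?_
          · simpa [Real.norm_eq_abs] using this
          · intro t ht
            have htI : t ∈ Icc (0:ℝ) π := by
              rw [uIoc_of_le hπ] at ht
              exact Ioc_subset_Icc_self ht
            rw [Real.norm_eq_abs, abs_mul, abs_mul]
            apply mul_le_mul
            · have := hqdiff ε hε1 t htI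
              calc |q 0 t - q ε t| = |q ε t - q 0 t| := abs_sub_comm _ _
                _ ≤ Lf * Cφ * |ε| := this
            · apply mul_le_mul ((hB 0 (by norm_num) t htI).1)
                ((hDiff ε hε1 t htI).1) (abs_nonneg _) hB0
            · exact mul_nonneg (abs_nonneg _) (abs_nonneg _)
            · positivity
        rw [Real.norm_eq_abs, abs_div]
        rw [div_le_iff₀ (abs_pos.mpr hε2)]
        calc |∫ t in (0:ℝ)..π, (q 0 t - q ε t) * (V 0 t * (V ε t - V 0 t))|
            ≤ ((Lf * Cφ * |ε|) * (B * (CD * |ε|))) * |π - 0| := hb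
          _ = Lf * Cφ * B * CD * π * |ε| * |ε| := by
              rw [sub_zero, abs_of_nonneg hπ]; ring
      · have : Filter.Tendsto (fun ε : ℝ => (Lf * Cφ * B * CD * π) * |ε|)
            (nhds 0) (nhds ((Lf * Cφ * B * CD * π) * |(0:ℝ)|)) :=
          (continuous_const.mul continuous_abs).tendsto 0
        simp only [abs_zero, mul_zero] at this
        exact this.mono_left nhdsWithin_le_nhds
    have hsum := T1.add T2
    rw [add_zero] at hsum
    apply hsum.congr
    intro ε
    rw [hJdec ε, add_div]
  -- ### derivative of sin (W ε π - W 0 π)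
  have hs : HasDerivAt (fun ε => Real.sin (W ε π - W 0 π))
      (-(V 0 π ^ 2 + V' 0 π ^ 2)⁻¹ * Itarget) 0 := by
    rw [hasDerivAt_iff_tendsto_slope]
    have hGG : Filter.Tendsto (fun ε => (G 0 π * G ε π)⁻¹) (nhdsWithin 0 {(0:ℝ)}ᶜ)
        (nhds ((G 0 π * G 0 π)⁻¹)) :=
      ((tendsto_const_nhds.mul hGlim).inv₀ (by positivity)).mono_left nhdsWithin_le_nhds
    have hmain := hJslope.mul hGG
    have hlimeq : -Itarget * (G 0 π * G 0 π)⁻¹ = -(V 0 π ^ 2 + V' 0 π ^ 2)⁻¹ * Itarget := by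
      have h := hGsq 0 (by norm_num) π hπI
      have h2 : G 0 π * G 0 π = V 0 π ^ 2 + V' 0 π ^ 2 := by nlinarith [h]
      rw [h2]; ring
    rw [hlimeq] at hmain
    apply Filter.Tendsto.congr' ?_ hmain
    have hne : ∀ᶠ ε : ℝ in nhdsWithin 0 {(0:ℝ)}ᶜ, ε ≠ 0 := by
      have := eventually_mem_nhdsWithin (s := {(0:ℝ)}ᶜ) (a := (0:ℝ))
      filter_upwards [this] with ε hε
      simpa using hε
    filter_upwards [hsmall.filter_mono nhdsWithin_le_nhds,
      hGne.filter_mono nhdsWithin_le_nhds, hne] with ε hε1 hε2 hε3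
    have hG0ne : G 0 π ≠ 0 := hG0π.ne'
    have hsin : Real.sin (W ε π - W 0 π)
        = (∫ t in (0:ℝ)..π, (q 0 t - q ε t) * (V 0 t * V ε t)) / (G 0 π * G ε π) := by
      rw [eq_div_iff (mul_ne_zero hG0ne hε2)]
      linear_combination hkey ε hε1
    rw [slope_def_field, hsin]
    simp only [sub_self, Real.sin_zero, sub_zero]
    ring
  -- ### invert the sine and conclude
  have harcsin : HasDerivAt Real.arcsin 1 (Real.sin (W 0 π - W 0 π)) := by
    have h := Real.hasDerivAt_arcsin (x := 0) (by norm_num) (by norm_num)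
    have h0 : Real.sin (W 0 π - W 0 π) = 0 := by simp
    rw [h0]
    simpa using h
  have hcomp := harcsin.comp 0 hs
  rw [one_mul] at hcomp
  have hev : (fun ε => W ε π - W 0 π)
      =ᶠ[nhds (0:ℝ)] (fun ε => Real.arcsin (Real.sin (W ε π - W 0 π))) := by
    have hδpos : (0:ℝ) < min 1 (1 / (CW + 1)) := by positivity
    have hsm : ∀ᶠ ε : ℝ in nhds 0, |ε| ≤ min 1 (1 / (CW + 1)) := by
      filter_upwards [Metric.closedBall_mem_nhds (0:ℝ) hδpos] with ε hε
      simpa [Real.dist_eq] using hε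
    filter_upwards [hsm] with ε hε
    have hε1 : |ε| ≤ 1 := le_trans hε (min_le_left _ _)
    have hb := hWd ε hε1 π hπI
    have h1 : |W ε π - W 0 π| ≤ 1 := by
      have h2 : CW * |ε| ≤ CW * (1 / (CW + 1)) :=
        mul_le_mul_of_nonneg_left (le_trans hε (min_le_right _ _)) hCW0
      have h3 : CW * (1 / (CW + 1)) ≤ 1 := by
        rw [mul_one_div, div_le_one (by linarith)]
        linarith
      linarith
    have h2 : (1:ℝ) ≤ π / 2 := by linarith [Real.two_le_pi]
    have h4 := abs_le.mp h1
    exact (Real.arcsin_sin (by linarith) (by linarith)).symm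
  have hθ : HasDerivAt (fun ε => W ε π - W 0 π) (-(V 0 π ^ 2 + V' 0 π ^ 2)⁻¹ * Itarget) 0 := by
    rw [hev.hasDerivAt_iff]
    exact hcomp
  have final := hθ.add_const (W 0 π)
  simpa using final
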